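/- arXiv:1701.06844 — 2 statements merged into one kernel-verified Lean document; each statement's English description precedes it below -/
import Mathlib

section
/- Let F be a field of characteristic 0 and q ≥ 1. For every g : Fin q → ZMod 2 × ZMod 2 with g ≠ 0, there exists h : Fin q → ZMod 2 × ZMod 2 such that c_h · c_g = −(c_g · c_h); consequently the commutator [c_h, c_g] = c_h c_g − c_g c_h equals 2·c_h·c_g and is nonzero. -/
/-!
Pauli matrices pairwise commute or anticommute, the sign being `(-1) ^ ω(u, v)` for the
symplectic form `ω = pauliForm` on `𝔽₂²`; signs multiply under Kronecker products, so
`c_h c_g = ± c_g c_h` with sign `(-1) ^ ∑ᵢ ω(hᵢ, gᵢ)`. If `gᵢ ≠ 0`, putting a Pauli matrix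
anticommuting with `σ_{gᵢ}` in slot `i` and `σ₀` elsewhere gives an anticommuting `c_h`.
The commutator is then `2 c_h c_g`, which is nonzero because every `c_g` is invertible
and `2 ≠ 0`.
-/

open Matrix

def sigmaP (F : Type*) [Field F] (u : ZMod 2 × ZMod 2) : Matrix (Fin 2) (Fin 2) F :=
  if u = (0, 0) then !![1, 0; 0, 1]
  else if u = (1, 0) then !![1, 0; 0, -1]
  else if u = (0, 1) then !![0, 1; 1, 0]
  else !![0, 1; -1, 0]

def pauliKron (F : Type*) [Field F] : {q : ℕ} → (Fin q → ZMod 2 × ZMod 2) →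
    Matrix (Fin (2 ^ q)) (Fin (2 ^ q)) F
  | 0, _ => 1
  | q + 1, g =>
      Matrix.reindex (finProdFinEquiv.trans (finCongr (pow_succ 2 q).symm))
        (finProdFinEquiv.trans (finCongr (pow_succ 2 q).symm))
        (Matrix.kroneckerMap (· * ·) (pauliKron F (fun i => g i.castSucc))
          (sigmaP F (g (Fin.last q))))

open Kronecker

def pauliForm (u v : ZMod 2 × ZMod 2) : ZMod 2 := u.1 * v.2 + u.2 * v.1

@[simp]
lemma pauliForm_zero_left (v : ZMod 2 × ZMod 2) : pauliForm 0 v = 0 := by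
  simp [pauliForm]

lemma exists_pauliForm_ne_zero {v : ZMod 2 × ZMod 2} (hv : v ≠ 0) : ∃ u, pauliForm u v ≠ 0 := by
  revert v; decide

lemma sigmaP_mul_comm (F : Type*) [Field F] (u v : ZMod 2 × ZMod 2) :
    sigmaP F u * sigmaP F v
      = (if pauliForm u v = 0 then (1 : F) else -1) • (sigmaP F v * sigmaP F u) := by
  obtain ⟨a, b⟩ := u
  obtain ⟨c, d⟩ := v
  fin_cases a <;> fin_cases b <;> fin_cases c <;> fin_cases d <;>
    simp +decide [sigmaP, pauliForm, mul_fin_two]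

lemma det_sigmaP_ne_zero (F : Type*) [Field F] (u : ZMod 2 × ZMod 2) : (sigmaP F u).det ≠ 0 := by
  obtain ⟨a, b⟩ := u
  fin_cases a <;> fin_cases b <;> simp +decide [sigmaP, det_fin_two_of]

section CommuteUpToScalar

variable {R : Type*} [CommRing R] {m n : Type*} [Fintype m] [Fintype n]

lemma kronecker_mul_eq_smul_mul {A B : Matrix m m R} {a b : Matrix n n R} {r s : R}
    (hAB : A * B = r • (B * A)) (hab : a * b = s • (b * a)) :
    (A ⊗ₖ a) * (B ⊗ₖ b) = (r * s) • ((B ⊗ₖ b) * (A ⊗ₖ a)) := by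
  rw [← mul_kronecker_mul, ← mul_kronecker_mul, hAB, hab, smul_kronecker, kronecker_smul,
    smul_smul]

lemma reindex_mul_eq_smul_mul [DecidableEq m] [DecidableEq n] (e : m ≃ n)
    {A B : Matrix m m R} {r : R} (hAB : A * B = r • (B * A)) :
    reindex e e A * reindex e e B = r • (reindex e e B * reindex e e A) := by
  simp only [← coe_reindexAlgEquiv R R e, ← map_mul, hAB, map_smul]

end CommuteUpToScalar

lemma pauliKron_succ (F : Type*) [Field F] {q : ℕ} (g : Fin (q + 1) → ZMod 2 × ZMod 2) :
    pauliKron F g = reindex (finProdFinEquiv.trans (finCongr (pow_succ 2 q).symm))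
      (finProdFinEquiv.trans (finCongr (pow_succ 2 q).symm))
      (pauliKron F (fun i => g i.castSucc) ⊗ₖ sigmaP F (g (Fin.last q))) :=
  rfl

lemma pauliKron_mul_comm (F : Type*) [Field F] {q : ℕ} (h g : Fin q → ZMod 2 × ZMod 2) :
    pauliKron F h * pauliKron F g
      = (∏ i, if pauliForm (h i) (g i) = 0 then (1 : F) else -1) •
          (pauliKron F g * pauliKron F h) := by
  induction q with
  | zero => simp [pauliKron]
  | succ q ih =>
    rw [pauliKron_succ, pauliKron_succ, Fin.prod_univ_castSucc]
    exact reindex_mul_eq_smul_mul _ (kronecker_mul_eq_smul_mul (ih _ _) (sigmaP_mul_comm F _ _))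

lemma isUnit_pauliKron (F : Type*) [Field F] {q : ℕ} (g : Fin q → ZMod 2 × ZMod 2) :
    IsUnit (pauliKron F g) := by
  rw [isUnit_iff_isUnit_det, isUnit_iff_ne_zero]
  induction q with
  | zero => simp [pauliKron]
  | succ q ih =>
    rw [pauliKron_succ, det_reindex_self, det_kronecker]
    exact mul_ne_zero (pow_ne_zero _ (ih _)) (pow_ne_zero _ (det_sigmaP_ne_zero F _))

lemma exists_pauliKron_mul_eq_neg (F : Type*) [Field F] {q : ℕ} {g : Fin q → ZMod 2 × ZMod 2}
    (hg : g ≠ 0) :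
    ∃ h : Fin q → ZMod 2 × ZMod 2,
      pauliKron F h * pauliKron F g = -(pauliKron F g * pauliKron F h) := by
  obtain ⟨i, hi⟩ := Function.ne_iff.mp hg
  obtain ⟨u, hu⟩ := exists_pauliForm_ne_zero hi
  refine ⟨Pi.single i u, ?_⟩
  rw [pauliKron_mul_comm, Finset.prod_eq_single i (fun j _ hj => by simp [hj]) (by simp)]
  simp [hu]

theorem pauliKron_exists_anticomm_general (F : Type*) [Field F] [CharZero F]
    (q : ℕ) (g : Fin q → ZMod 2 × ZMod 2) (hg : g ≠ 0) :
    ∃ h : Fin q → ZMod 2 × ZMod 2,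
      pauliKron F h * pauliKron F g = -(pauliKron F g * pauliKron F h) ∧
      pauliKron F h * pauliKron F g - pauliKron F g * pauliKron F h =
        (2 : F) • (pauliKron F h * pauliKron F g) ∧
      pauliKron F h * pauliKron F g - pauliKron F g * pauliKron F h ≠ 0 := by
  obtain ⟨h, hanti⟩ := exists_pauliKron_mul_eq_neg F hg
  have hcomm : pauliKron F h * pauliKron F g - pauliKron F g * pauliKron F h =
      (2 : F) • (pauliKron F h * pauliKron F g) := by
    rw [two_smul, sub_eq_add_neg, ← hanti]
  refine ⟨h, hanti, hcomm, ?_⟩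
  rw [hcomm]
  exact smul_ne_zero two_ne_zero ((isUnit_pauliKron F h).mul (isUnit_pauliKron F g)).ne_zero

/-- For every `g ≠ 0` there is an `h` with `c_h` anticommuting with `c_g`; hence the
commutator `[c_h, c_g]` equals `2·c_h·c_g` and is nonzero. -/
theorem pauliKron_exists_anticomm (F : Type*) [Field F] [CharZero F]
    (q : ℕ) (hq : 1 ≤ q) (g : Fin q → ZMod 2 × ZMod 2) (hg : g ≠ 0) :
    ∃ h : Fin q → ZMod 2 × ZMod 2,
      pauliKron F h * pauliKron F g = -(pauliKron F g * pauliKron F h) ∧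
      pauliKron F h * pauliKron F g - pauliKron F g * pauliKron F h =
        (2 : F) • (pauliKron F h * pauliKron F g) ∧
      pauliKron F h * pauliKron F g - pauliKron F g * pauliKron F h ≠ 0 :=
  pauliKron_exists_anticomm_general F q g hg
end

section
/- Let F be a field of characteristic 0, q ≥ 1, t = 2^q. Let P(t) ⊆ M_{2t}(F) be the subspace of block matrices [[A, B],[C, −Aᵀ]] with A, B, C t×t matrices, trace A = 0, Bᵀ = B, Cᵀ = −C. Then P(t) is the internal direct sum of the following one-dimensional subspaces, indexed by the group G = ZMod 2 × (ZMod 2 × ZMod 2)^q: for each g ≠ 0 in (ZMod 2 × ZMod 2)^q, the span of the block-diagonal matrix diag(c_g, −c_gᵀ); for each g with c_gᵀ = c_g, the span of [[0, c_g],[0, 0]]; and for each g with c_gᵀ = −c_g, the span of [[0, 0],[c_g, 0]]. In particular dim P(t) = 2t² − 1. -/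
open Matrix

/-- The Lie superalgebra `P(t)` realised as the subspace of `2t×2t` block matrices
`[[A, B], [C, −Aᵀ]]` with `trace A = 0`, `Bᵀ = B`, `Cᵀ = −C`. -/
def Psubmodule (F : Type*) [Field F] (t : ℕ) :
    Submodule F (Matrix (Fin t ⊕ Fin t) (Fin t ⊕ Fin t) F) where
  carrier := {M | Matrix.trace M.toBlocks₁₁ = 0 ∧ (M.toBlocks₁₂)ᵀ = M.toBlocks₁₂ ∧
    (M.toBlocks₂₁)ᵀ = -M.toBlocks₂₁ ∧ M.toBlocks₂₂ = -(M.toBlocks₁₁)ᵀ}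
  zero_mem' := by
    refine ⟨?_, ?_, ?_, ?_⟩
    · simp [Matrix.toBlocks₁₁, Matrix.trace, Matrix.diag]
    · ext i j; simp [Matrix.toBlocks₁₂]
    · ext i j; simp [Matrix.toBlocks₂₁]
    · ext i j; simp [Matrix.toBlocks₂₂, Matrix.toBlocks₁₁]
  add_mem' := by
    intro a b ha hb
    obtain ⟨h1, h2, h3, h4⟩ := ha
    obtain ⟨k1, k2, k3, k4⟩ := hb
    have e11 : (a + b).toBlocks₁₁ = a.toBlocks₁₁ + b.toBlocks₁₁ := rfl
    have e12 : (a + b).toBlocks₁₂ = a.toBlocks₁₂ + b.toBlocks₁₂ := rfl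
    have e21 : (a + b).toBlocks₂₁ = a.toBlocks₂₁ + b.toBlocks₂₁ := rfl
    have e22 : (a + b).toBlocks₂₂ = a.toBlocks₂₂ + b.toBlocks₂₂ := rfl
    refine ⟨?_, ?_, ?_, ?_⟩
    · rw [e11, Matrix.trace_add, h1, k1, add_zero]
    · rw [e12, Matrix.transpose_add, h2, k2]
    · rw [e21, Matrix.transpose_add, h3, k3, neg_add]
    · rw [e22, e11, h4, k4, Matrix.transpose_add, neg_add]
  smul_mem' := by
    intro c a ha
    obtain ⟨h1, h2, h3, h4⟩ := ha
    have e11 : (c • a).toBlocks₁₁ = c • a.toBlocks₁₁ := rfl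
    have e12 : (c • a).toBlocks₁₂ = c • a.toBlocks₁₂ := rfl
    have e21 : (c • a).toBlocks₂₁ = c • a.toBlocks₂₁ := rfl
    have e22 : (c • a).toBlocks₂₂ = c • a.toBlocks₂₂ := rfl
    refine ⟨?_, ?_, ?_, ?_⟩
    · rw [e11, Matrix.trace_smul, h1, smul_zero]
    · rw [e12, Matrix.transpose_smul, h2]
    · rw [e21, Matrix.transpose_smul, h3, smul_neg]
    · rw [e22, e11, h4, Matrix.transpose_smul, smul_neg]

open scoped Classical in
/-- The homogeneous components of the Pauli grading on `P(t)`, indexed by the group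
`G = ZMod 2 × (ZMod 2 × ZMod 2)^q`. -/
noncomputable def Pcomponent (F : Type*) [Field F] (q : ℕ)
    (e : ZMod 2 × (Fin q → ZMod 2 × ZMod 2)) :
    Submodule F (Matrix (Fin (2 ^ q) ⊕ Fin (2 ^ q)) (Fin (2 ^ q) ⊕ Fin (2 ^ q)) F) :=
  if e.1 = 0 then
    (if e.2 ≠ 0 then
      Submodule.span F
        {Matrix.fromBlocks (pauliKron F e.2) 0 0 (-(pauliKron F e.2)ᵀ)}
    else ⊥)
  else
    if (pauliKron F e.2)ᵀ = pauliKron F e.2 then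
      Submodule.span F {Matrix.fromBlocks 0 (pauliKron F e.2) 0 0}
    else if (pauliKron F e.2)ᵀ = -pauliKron F e.2 then
      Submodule.span F {Matrix.fromBlocks 0 0 (pauliKron F e.2) 0}
    else ⊥

/-!
The matrices `c_g` form a projective representation of `(ZMod 2 × ZMod 2)^q`:
`c_g c_h = ±c_{g+h}`, `c_gᵀ = ±c_g`, and `tr c_g = 0` unless `g = 0`; all three are checked on the
four `2 × 2` matrices and propagate through Kronecker products. Hence the `c_g` are orthogonal for
the trace form `(A, B) ↦ tr (A B)` with nonzero square norms `±t`, so they form a basis of the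
`t × t` matrices, each of them symmetric or skew.

An element of `P(t)` is `Peven A + Podd X` with `tr A = 0`, where `Peven A = diag(A, -Aᵀ)` and
`Podd X` carries the symmetric part of `X` above and its skew part below the diagonal. Expanding `A`
(which has no `c_0` term, by the trace) and `X` in the basis `c_g` shows that the generators of the
components span `P(t)`; they are linearly independent because the `c_g` are.
-/

open scoped Kronecker

section Sigma

variable (F : Type*) [Field F]

lemma sigmaP_mul_sigmaP (u v : ZMod 2 × ZMod 2) :
    ∃ ε : ℤˣ, sigmaP F u * sigmaP F v = ε • sigmaP F (u + v) := by
  fin_cases u <;> fin_cases v <;>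
  first
  | (refine ⟨1, ?_⟩; ext i j; fin_cases i <;> fin_cases j <;>
      simp +decide [sigmaP, Matrix.mul_apply]; done)
  | (refine ⟨-1, ?_⟩; ext i j; fin_cases i <;> fin_cases j <;>
      simp +decide [sigmaP, Matrix.mul_apply, Units.smul_def])

lemma sigmaP_transpose (u : ZMod 2 × ZMod 2) : ∃ ε : ℤˣ, (sigmaP F u)ᵀ = ε • sigmaP F u := by
  fin_cases u <;>
  first
  | (refine ⟨1, ?_⟩; ext i j; fin_cases i <;> fin_cases j <;> simp +decide [sigmaP]; done)
  | (refine ⟨-1, ?_⟩; ext i j; fin_cases i <;> fin_cases j <;>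
      simp +decide [sigmaP, Units.smul_def])

lemma trace_sigmaP (u : ZMod 2 × ZMod 2) : trace (sigmaP F u) = if u = 0 then 2 else 0 := by
  fin_cases u <;> norm_num +decide [sigmaP, trace_fin_two]

end Sigma

lemma trace_reindex {R m n : Type*} [AddCommMonoid R] [Fintype m] [Fintype n] (e : m ≃ n)
    (M : Matrix m m R) : trace (reindex e e M) = trace M :=
  Fintype.sum_equiv e.symm _ _ fun _ => rfl

section Pauli

variable (F : Type*) [Field F]

lemma pauliKron_mul_pauliKron {q : ℕ} (g h : Fin q → ZMod 2 × ZMod 2) :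
    ∃ ε : ℤˣ, pauliKron F g * pauliKron F h = ε • pauliKron F (g + h) := by
  induction q with
  | zero => exact ⟨1, by simp [pauliKron]⟩
  | succ q ih =>
    obtain ⟨ε, hε⟩ := ih (fun i => g i.castSucc) (fun i => h i.castSucc)
    obtain ⟨δ, hδ⟩ := sigmaP_mul_sigmaP F (g (Fin.last q)) (h (Fin.last q))
    refine ⟨ε * δ, ?_⟩
    rw [pauliKron, pauliKron, pauliKron, reindex_apply, reindex_apply,
      submatrix_mul_equiv, ← mul_kronecker_mul, hε, hδ, smul_kronecker, kronecker_smul, smul_smul]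
    rfl

lemma pauliKron_transpose {q : ℕ} (g : Fin q → ZMod 2 × ZMod 2) :
    ∃ ε : ℤˣ, (pauliKron F g)ᵀ = ε • pauliKron F g := by
  induction q with
  | zero => exact ⟨1, by simp [pauliKron]⟩
  | succ q ih =>
    obtain ⟨ε, hε⟩ := ih (fun i => g i.castSucc)
    obtain ⟨δ, hδ⟩ := sigmaP_transpose F (g (Fin.last q))
    refine ⟨ε * δ, ?_⟩
    rw [pauliKron, transpose_reindex, ← kroneckerMap_transpose, hε, hδ, smul_kronecker,
      kronecker_smul, smul_smul]
    rfl

lemma trace_pauliKron {q : ℕ} (g : Fin q → ZMod 2 × ZMod 2) :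
    trace (pauliKron F g) = if g = 0 then 2 ^ q else 0 := by
  induction q with
  | zero => simp [pauliKron, Subsingleton.elim g 0]
  | succ q ih =>
    rw [pauliKron, trace_reindex, trace_kronecker, ih, trace_sigmaP]
    have : g = 0 ↔ (fun i : Fin q => g i.castSucc) = 0 ∧ g (Fin.last q) = 0 := by
      simp only [funext_iff, Fin.forall_fin_succ', Pi.zero_apply]
    by_cases h₁ : (fun i : Fin q => g i.castSucc) = 0 <;> by_cases h₂ : g (Fin.last q) = 0 <;>
      simp [this, h₁, h₂, pow_succ]

lemma transpose_pauliKron_eq_or {q : ℕ} (g : Fin q → ZMod 2 × ZMod 2) :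
    (pauliKron F g)ᵀ = pauliKron F g ∨ (pauliKron F g)ᵀ = -pauliKron F g := by
  obtain ⟨ε, hε⟩ := pauliKron_transpose F g
  rcases Int.units_eq_one_or ε with rfl | rfl <;> simp [hε]

end Pauli

section PauliBasis

variable (F : Type*) [Field F] [NeZero (2 : F)] {q : ℕ}

lemma linearIndependent_pauliKron : LinearIndependent F (pauliKron F (q := q)) := by
  let B : LinearMap.BilinForm F (Matrix (Fin (2 ^ q)) (Fin (2 ^ q)) F) :=
    (LinearMap.mul F _).compr₂ (traceLinearMap _ F F)
  have hB (g h : Fin q → ZMod 2 × ZMod 2) :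
      ∃ ε : ℤˣ, B (pauliKron F g) (pauliKron F h) = if g = h then ε • 2 ^ q else 0 := by
    obtain ⟨ε, hε⟩ := pauliKron_mul_pauliKron F g h
    exact ⟨ε, by simp [B, hε, trace_pauliKron, add_eq_zero_iff_eq_neg, ZModModule.neg_eq_self]⟩
  refine LinearMap.BilinForm.linearIndependent_of_iIsOrtho (B := B)
    (LinearMap.BilinForm.iIsOrtho_def.2 fun g h hgh => ?_) fun g => ?_
  · obtain ⟨ε, hε⟩ := hB g h
    simp [hε, hgh]
  · obtain ⟨ε, hε⟩ := hB g g
    rcases Int.units_eq_one_or ε with rfl | rfl <;> simp [hε, two_ne_zero]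

variable (q) in
noncomputable def pauliBasis :
    Module.Basis (Fin q → ZMod 2 × ZMod 2) F (Matrix (Fin (2 ^ q)) (Fin (2 ^ q)) F) :=
  basisOfLinearIndependentOfCardEqFinrank (linearIndependent_pauliKron F) <| by
    simp [Module.finrank_matrix, ← mul_pow]

@[simp]
lemma coe_pauliBasis : ⇑(pauliBasis F q) = pauliKron F :=
  coe_basisOfLinearIndependentOfCardEqFinrank ..

lemma mem_span_pauliKron_of_trace_eq_zero {A : Matrix (Fin (2 ^ q)) (Fin (2 ^ q)) F}
    (hA : trace A = 0) : A ∈ Submodule.span F (pauliKron F '' {g | g ≠ 0}) := by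
  have htrace : trace A = (pauliBasis F q).repr A 0 * 2 ^ q := by
    conv_lhs => rw [← (pauliBasis F q).sum_repr A]
    simp [trace_sum, trace_pauliKron]
  rw [← coe_pauliBasis, Module.Basis.mem_span_image]
  rintro g hg rfl
  rw [hA, eq_comm, mul_eq_zero] at htrace
  exact Finsupp.mem_support_iff.mp hg (htrace.resolve_right (pow_ne_zero _ two_ne_zero))

lemma transpose_pauliKron_ne_neg {g : Fin q → ZMod 2 × ZMod 2}
    (hsymm : (pauliKron F g)ᵀ = pauliKron F g) : (pauliKron F g)ᵀ ≠ -pauliKron F g := by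
  intro hskew
  have : (2 : F) • pauliKron F g = 0 := by
    rw [two_smul]
    nth_rewrite 1 [← hsymm]
    rw [hskew, neg_add_cancel]
  exact (linearIndependent_pauliKron F).ne_zero g ((smul_eq_zero.mp this).resolve_left two_ne_zero)

end PauliBasis

section Blocks

variable (F : Type*) [Field F] (n : Type*)

@[simps]
def Peven : Matrix n n F →ₗ[F] Matrix (n ⊕ n) (n ⊕ n) F where
  toFun A := fromBlocks A 0 0 (-Aᵀ)
  map_add' A B := by simp [fromBlocks_add, add_comm]
  map_smul' c A := by simp [fromBlocks_smul]

@[simps]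
def Podd : Matrix n n F →ₗ[F] Matrix (n ⊕ n) (n ⊕ n) F where
  toFun X := fromBlocks 0 ((2 : F)⁻¹ • (X + Xᵀ)) ((2 : F)⁻¹ • (X - Xᵀ)) 0
  map_add' X Y := by simp [fromBlocks_add]; constructor <;> module
  map_smul' c X := by simp [fromBlocks_smul]; constructor <;> module

variable {F n} [NeZero (2 : F)]

lemma Podd_of_transpose_eq_self {X : Matrix n n F} (h : Xᵀ = X) :
    Podd F n X = fromBlocks 0 X 0 0 := by
  rw [Podd_apply, h, sub_self, smul_zero, ← two_smul F X, inv_smul_smul₀ two_ne_zero]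

lemma Podd_of_transpose_eq_neg {X : Matrix n n F} (h : Xᵀ = -X) :
    Podd F n X = fromBlocks 0 0 X 0 := by
  rw [Podd_apply, h, add_neg_cancel, sub_neg_eq_add, smul_zero, ← two_smul F X,
    inv_smul_smul₀ two_ne_zero]

lemma Peven_add_Podd_eq_zero {A X : Matrix n n F} (h : Peven F n A + Podd F n X = 0) :
    A = 0 ∧ X = 0 := by
  rw [Peven_apply, Podd_apply, fromBlocks_add, ← fromBlocks_zero, fromBlocks_inj] at h
  obtain ⟨hA, hsymm, hskew, -⟩ := h
  refine ⟨by simpa using hA, ?_⟩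
  calc X = (2 : F)⁻¹ • (X + Xᵀ) + (2 : F)⁻¹ • (X - Xᵀ) := by
        match_scalars <;> field_simp <;> ring
    _ = 0 := by simp_all

lemma mem_Psubmodule_iff {t : ℕ} {M : Matrix (Fin t ⊕ Fin t) (Fin t ⊕ Fin t) F} :
    M ∈ Psubmodule F t ↔ ∃ A X, trace A = 0 ∧ Peven F _ A + Podd F _ X = M := by
  constructor
  · rintro ⟨htrace, hsymm, hskew, hdiag⟩
    refine ⟨M.toBlocks₁₁, M.toBlocks₁₂ + M.toBlocks₂₁, htrace, ?_⟩
    conv_rhs => rw [← fromBlocks_toBlocks M]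
    rw [Peven_apply, Podd_apply, fromBlocks_add, transpose_add, hsymm, hskew, hdiag]
    congr 1 <;> match_scalars <;> field_simp <;> ring
  · rintro ⟨A, X, htrace, rfl⟩
    refine ⟨?_, ?_, ?_, ?_⟩ <;> simp [fromBlocks_add, htrace] <;> module

end Blocks

section Generators

variable (F : Type*) [Field F] (q : ℕ)

def pauliGen (e : ZMod 2 × (Fin q → ZMod 2 × ZMod 2)) :
    Matrix (Fin (2 ^ q) ⊕ Fin (2 ^ q)) (Fin (2 ^ q) ⊕ Fin (2 ^ q)) F :=
  if e.1 = 0 then Peven F _ (pauliKron F e.2) else Podd F _ (pauliKron F e.2)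

lemma Pcomponent_zero : Pcomponent F q 0 = ⊥ := by
  simp [Pcomponent]

variable {F q} [NeZero (2 : F)]

lemma Pcomponent_eq_span {e : ZMod 2 × (Fin q → ZMod 2 × ZMod 2)} (he : e ≠ 0) :
    Pcomponent F q e = Submodule.span F {pauliGen F q e} := by
  obtain ⟨x, g⟩ := e
  by_cases hx : x = 0
  · have hg : g ≠ 0 := by rintro rfl; exact he (by rw [hx]; rfl)
    simp [Pcomponent, pauliGen, hx, hg]
  · rcases transpose_pauliKron_eq_or F g with hsymm | hskew
    · simp [Pcomponent, pauliGen, hx, hsymm, Podd_of_transpose_eq_self hsymm]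
    · have hnsymm : -pauliKron F g ≠ pauliKron F g := fun h =>
        transpose_pauliKron_ne_neg F (hskew.trans h) hskew
      simp [Pcomponent, pauliGen, hx, hskew, hnsymm, Podd_of_transpose_eq_neg hskew]

lemma pauliGen_mem_Psubmodule {e : ZMod 2 × (Fin q → ZMod 2 × ZMod 2)} (he : e ≠ 0) :
    pauliGen F q e ∈ Psubmodule F (2 ^ q) := by
  obtain ⟨x, g⟩ := e
  rw [mem_Psubmodule_iff]
  by_cases hx : x = 0
  · have hg : g ≠ 0 := by rintro rfl; exact he (by rw [hx]; rfl)
    exact ⟨pauliKron F g, 0, by simp [trace_pauliKron, hg], by simp [pauliGen, hx]⟩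
  · exact ⟨0, pauliKron F g, trace_zero _ _, by simp [pauliGen, hx]⟩

lemma Pcomponent_le_Psubmodule (e : ZMod 2 × (Fin q → ZMod 2 × ZMod 2)) :
    Pcomponent F q e ≤ Psubmodule F (2 ^ q) := by
  by_cases he : e = 0
  · simp [he, Pcomponent_zero]
  · rw [Pcomponent_eq_span he, Submodule.span_singleton_le_iff_mem]
    exact pauliGen_mem_Psubmodule he

lemma linearIndependent_pauliGen : LinearIndependent F (pauliGen F q) := by
  rw [Fintype.linearIndependent_iff]
  intro c hc
  have hsplit : Peven F _ (∑ g, c (0, g) • pauliKron F g) + Podd F _ (∑ g, c (1, g) • pauliKron F g)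
      = 0 := by
    rw [← hc, Fintype.sum_prod_type, show (Finset.univ : Finset (ZMod 2)) = {0, 1} by decide,
      Finset.sum_pair zero_ne_one]
    simp [pauliGen, map_sum]
  obtain ⟨heven, hodd⟩ := Peven_add_Podd_eq_zero hsplit
  rintro ⟨x, g⟩
  fin_cases x
  · exact Fintype.linearIndependent_iff.mp (linearIndependent_pauliKron F) _ heven g
  · exact Fintype.linearIndependent_iff.mp (linearIndependent_pauliKron F) _ hodd g

lemma Psubmodule_eq_span_pauliGen :
    Psubmodule F (2 ^ q) = Submodule.span F
      (Set.range fun e : {e : ZMod 2 × (Fin q → ZMod 2 × ZMod 2) // e ≠ 0} => pauliGen F q e) := by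
  refine le_antisymm (fun M hM => ?_) <| Submodule.span_le.mpr <| Set.range_subset_iff.mpr
    fun e => pauliGen_mem_Psubmodule e.2
  obtain ⟨A, X, hA, rfl⟩ := mem_Psubmodule_iff.mp hM
  refine Submodule.add_mem _ ?_ ?_
  · have hmem :=
      Submodule.mem_map_of_mem (f := Peven F _) (mem_span_pauliKron_of_trace_eq_zero F hA)
    rw [← Submodule.span_image] at hmem
    refine Submodule.span_mono ?_ hmem
    rintro _ ⟨_, ⟨g, hg, rfl⟩, rfl⟩
    exact ⟨⟨(0, g), by simp_all⟩, by simp [pauliGen]⟩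
  · have hX : X ∈ Submodule.span F (Set.range (pauliKron F)) := by
      rw [← coe_pauliBasis, (pauliBasis F q).span_eq]; trivial
    have hmem := Submodule.mem_map_of_mem (f := Podd F _) hX
    rw [← Submodule.span_image] at hmem
    refine Submodule.span_mono ?_ hmem
    rintro _ ⟨_, ⟨g, rfl⟩, rfl⟩
    exact ⟨⟨(1, g), by simp⟩, by simp [pauliGen]⟩

end Generators

theorem Pt_pauli_grading_general (F : Type*) [Field F] [CharZero F] (q : ℕ) :
    iSupIndep (Pcomponent F q) ∧
    (⨆ e, Pcomponent F q e) = Psubmodule F (2 ^ q) ∧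
    (∀ e, Pcomponent F q e ≠ ⊥ → Module.finrank F (Pcomponent F q e) = 1) ∧
    Module.finrank F (Psubmodule F (2 ^ q)) = 2 * (2 ^ q) ^ 2 - 1 := by
  have hindep := linearIndependent_pauliGen (F := F) (q := q)
  have hle_span (e) : Pcomponent F q e ≤ Submodule.span F {pauliGen F q e} := by
    by_cases he : e = 0
    · simp [he, Pcomponent_zero]
    · exact (Pcomponent_eq_span he).le
  refine ⟨hindep.iSupIndep_span_singleton.mono hle_span,
    (iSup_le Pcomponent_le_Psubmodule).antisymm ?_, fun e he => ?_, ?_⟩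
  · rw [Psubmodule_eq_span_pauliGen, Submodule.span_le, Set.range_subset_iff]
    refine fun e => Submodule.mem_iSup_of_mem e.1 ?_
    rw [Pcomponent_eq_span e.2]
    exact Submodule.mem_span_singleton_self _
  · have he : e ≠ 0 := by rintro rfl; exact he (Pcomponent_zero F q)
    rw [Pcomponent_eq_span he, finrank_span_singleton (hindep.ne_zero e)]
  · rw [Psubmodule_eq_span_pauliGen]
    refine (finrank_span_eq_card (hindep.comp _ Subtype.val_injective)).trans ?_
    rw [Fintype.card_subtype_compl, Fintype.card_subtype_eq]
    simp [Fintype.card_prod, ← pow_mul, pow_mul']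

/-- `P(t)` (for `t = 2^q`) is the internal direct sum of the one-dimensional
homogeneous components of the Pauli grading; in particular `dim P(t) = 2t² − 1`. -/
theorem Pt_pauli_grading (F : Type*) [Field F] [CharZero F] (q : ℕ) (hq : 1 ≤ q) :
    iSupIndep (Pcomponent F q) ∧
    (⨆ e, Pcomponent F q e) = Psubmodule F (2 ^ q) ∧
    (∀ e, Pcomponent F q e ≠ ⊥ → Module.finrank F (Pcomponent F q e) = 1) ∧
    Module.finrank F (Psubmodule F (2 ^ q)) = 2 * (2 ^ q) ^ 2 - 1 :=
  Pt_pauli_grading_general F q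
end
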